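/- Let Δ(z) = (A + (z/(1−z)) 𝟙 bᵀ)^{-1} for the 2-stage Radau IIa scheme. For z in the open unit disk (z ≠ 1), the matrix A + (z/(1−z)) 𝟙 bᵀ is invertible; equivalently det(A + (z/(1−z)) 𝟙 bᵀ) ≠ 0 for all |z| < 1. -/

import Mathlib

/-- Coefficient matrix of the 2-stage Radau IIa scheme. -/
noncomputable def radauA : Matrix (Fin 2) (Fin 2) ℂ := !![5/12, -1/12; 3/4, 1/4]

/-- Weight vector of the 2-stage Radau IIa scheme. -/
noncomputable def radauB : Fin 2 → ℂ := ![3/4, 1/4]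

/-! By the matrix determinant lemma, `det (A + w • 𝟙 bᵀ) = det A * (1 + w * (b ⬝ A⁻¹ 𝟙))`.
Here `det A = 1/6` and `A⁻¹ 𝟙 = (2, -2)`, so `b ⬝ A⁻¹ 𝟙 = 1` and the determinant is `(1 + w) / 6`,
which for `w = z / (1 - z)` equals `1 / (6 (1 - z))` and never vanishes. -/

open Matrix

/-- The matrix determinant lemma; supplying `A⁻¹ u` as a preimage `x` of `u` removes the need
for `A` to be invertible. -/
theorem Matrix.det_add_vecMulVec_mulVec {n R : Type*} [Fintype n] [DecidableEq n] [CommRing R]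
    (A : Matrix n n R) (x v : n → R) :
    (A + vecMulVec (A *ᵥ x) v).det = A.det * (1 + v ⬝ᵥ x) := by
  have factor : A + vecMulVec (A *ᵥ x) v = A * (1 + vecMulVec x v) := by
    rw [Matrix.mul_add, Matrix.mul_one, vecMulVec_eq Unit, vecMulVec_eq Unit, replicateCol_mulVec,
      Matrix.mul_assoc]
  rw [factor, det_mul, vecMulVec_eq Unit, det_one_add_replicateCol_mul_replicateRow]

lemma radauA_det : radauA.det = 1 / 6 := by
  norm_num [radauA, det_fin_two]

lemma radauA_mulVec : radauA *ᵥ ![2, -2] = ![1, 1] := by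
  ext i
  fin_cases i <;> norm_num [radauA]

lemma radauB_dotProduct : radauB ⬝ᵥ ![2, -2] = 1 := by
  norm_num [radauB]

lemma det_radauA_add_smul_vecMulVec (w : ℂ) :
    (radauA + w • vecMulVec ![1, 1] radauB).det = (1 + w) / 6 := by
  rw [← vecMulVec_smul, ← radauA_mulVec, det_add_vecMulVec_mulVec, radauA_det,
    smul_dotProduct, radauB_dotProduct, smul_eq_mul, mul_one]
  ring

/-- For the 2-stage Radau IIa scheme, the matrix `A + (z/(1-z)) 𝟙 bᵀ` is
invertible for every `z` in the open unit disk: its determinant does not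
vanish for `‖z‖ < 1`. -/
theorem radau_delta_invertible (z : ℂ) (hz : ‖z‖ < 1) :
    (radauA + (z / (1 - z)) • Matrix.vecMulVec ![1, 1] radauB).det ≠ 0 := by
  have hz1 : 1 - z ≠ 0 := sub_ne_zero.2 fun h => by simp [← h] at hz
  rw [det_radauA_add_smul_vecMulVec, one_add_div hz1, sub_add_cancel]
  simpa using hz1
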